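/- Substituting q = 1 into the inversion enumerator polynomial Q_n(x,q) = Σ_{w ∈ RC_n} x^{|w|_1} q^{inv(w)} yields Σ_{k=0}^{⌊n/2⌋} C(n-1-k, k) x^k for n ≥ 2; that is, the number of run-constrained binary strings of length n with exactly k ones equals C(n-1-k, k). -/

import Mathlib

/-- Run-constrained binary strings (bits encoded as `1 = true`, `0 = false`):
the strings in which every maximal run of 1s is immediately followed by a
strictly longer run of 0s; equivalently (as stated in the paper), the
concatenations of zero or more words from the infinite alphabet
`R = {0} ∪ {1^i 0^{i+1} : i ≥ 1}`. -/
inductive RunConstrained : List Bool → Prop where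
  | nil : RunConstrained []
  | zero {w : List Bool} : RunConstrained w → RunConstrained (false :: w)
  | block {w : List Bool} (i : ℕ) (hi : 1 ≤ i) : RunConstrained w →
      RunConstrained (List.replicate i true ++ List.replicate (i + 1) false ++ w)

/-- Vertices of the Fibonacci-run graph `R_n`: binary strings `w` of length `n`
such that `w00` is a run-constrained string of length `n+2`. -/
def RunVertex (n : ℕ) :=
  {w : Fin n → Bool // RunConstrained (List.ofFn w ++ [false, false])}

/-- The Fibonacci-run graph `R_n`: two vertices are adjacent iff their
Hamming distance is 1. -/
def runGraph (n : ℕ) : SimpleGraph (RunVertex n) where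
  Adj u v := hammingDist u.1 v.1 = 1
  symm := ⟨fun u v h => (hammingDist_comm v.1 u.1).trans h⟩
  loopless := ⟨fun u h => by simp [hammingDist_self] at h⟩

attribute [local instance] Classical.propDecidable

/-- The set of run-constrained binary strings of length `n`. -/
def RC (n : ℕ) := {w : Fin n → Bool // RunConstrained (List.ofFn w)}

noncomputable instance (n : ℕ) : Fintype (RC n) := Subtype.fintype _

/-- The number of inversions of a binary string `w`: pairs `i < j` with
`w_i = 1` and `w_j = 0`. -/
def inv {n : ℕ} (w : Fin n → Bool) : ℕ :=
  (Finset.univ.filter fun p : Fin n × Fin n =>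
    p.1 < p.2 ∧ w p.1 = true ∧ w p.2 = false).card

open MvPolynomial in
/-- The inversion enumerator polynomial
`Q_n(x,q) = Σ_{w ∈ RC_n} x^{|w|₁} q^{inv(w)}`, with `x = X 0`, `q = X 1`. -/
noncomputable def Q (n : ℕ) : MvPolynomial (Fin 2) ℤ :=
  ∑ w : RC n, X 0 ^ (List.ofFn w.1).count true * X 1 ^ inv w.1


/-!
Let `c(n, k)` be the number of run-constrained words of length `n` with `k` ones. A word `0w` is
run-constrained iff `w` is, and a run-constrained word starting with 1 begins with a block
`1^(i+1) 0^(i+2)`; shrinking that block to `1^i 0^(i+1)` is a bijection onto the nonempty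
run-constrained words with two fewer letters and one fewer 1 (`growFirstBlock` is its inverse).
Hence `c(n+3, k+1) = c(n+2, k+1) + c(n+1, k)`, which is Pascal's rule for `C(n-1-k, k)`. The base
cases are `c(n, 0) = 1` and `c(n, k) = 0` for `0 < k`, `n ≤ 2k`, since each block `1^i 0^(i+1)`
is longer than twice its number of ones. At `q = 1` every word contributes `x^k`, so
`Q_n(x, 1) = Σ_k c(n, k) x^k`.
-/

open List Finset

namespace RunConstrained

theorem replicate_false (n : ℕ) : RunConstrained (replicate n false) := by
  induction n with
  | zero => exact .nil
  | succ n ih => exact .zero ih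

theorem block_append (i : ℕ) {u : List Bool} (hu : RunConstrained u) :
    RunConstrained (replicate i true ++ replicate (i + 1) false ++ u) := by
  rcases Nat.eq_zero_or_pos i with rfl | hi
  · exact .zero hu
  · exact .block i hi hu

theorem of_false_cons {w : List Bool} (h : RunConstrained (false :: w)) : RunConstrained w := by
  generalize hl : false :: w = l at h
  cases h with
  | nil => cases hl
  | zero h => cases hl; exact h
  | block i hi _ =>
    obtain ⟨j, rfl⟩ := Nat.exists_eq_add_of_le' hi
    simp [replicate_succ] at hl

theorem exists_eq_block_append {l : List Bool} (h : RunConstrained l) (hl : l ≠ []) :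
    ∃ i u, RunConstrained u ∧ l = replicate i true ++ replicate (i + 1) false ++ u := by
  cases h with
  | nil => exact absurd rfl hl
  | zero h => exact ⟨0, _, h, rfl⟩
  | block i _ h => exact ⟨i, _, h, rfl⟩

theorem two_mul_count_true_lt_length {w : List Bool} (h : RunConstrained w)
    (hw : w.count true ≠ 0) : 2 * w.count true < w.length := by
  induction h with
  | nil => simp at hw
  | zero _ ih =>
    simp only [count_cons_of_ne Bool.false_ne_true, length_cons] at hw ⊢
    have := ih hw
    omega
  | @block u i _ _ ih =>
    have no_true : (replicate (i + 1) false).count true = 0 := count_eq_zero.2 (by simp)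
    simp only [count_append, count_replicate_self, no_true, length_append,
      length_replicate] at hw ⊢
    rcases eq_or_ne (u.count true) 0 with hu | hu
    · omega
    · have := ih hu
      omega

end RunConstrained

def growFirstBlock (v : List Bool) : List Bool :=
  true :: (v.takeWhile id ++ false :: v.dropWhile id)

theorem growFirstBlock_block_append (i : ℕ) (u : List Bool) :
    growFirstBlock (replicate i true ++ replicate (i + 1) false ++ u) =
      replicate (i + 1) true ++ replicate (i + 2) false ++ u := by
  have split : replicate i true ++ replicate (i + 1) false ++ u =
      replicate i true ++ false :: (replicate i false ++ u) := by
    simp [replicate_succ]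
  have take : ∀ r, (replicate i true ++ false :: r).takeWhile id = replicate i true := by
    intro r; induction i <;> simp_all [replicate_succ]
  have drop : ∀ r, (replicate i true ++ false :: r).dropWhile id = false :: r := by
    intro r; induction i <;> simp_all [replicate_succ]
  rw [growFirstBlock, split, take, drop]
  simp [replicate_succ]

theorem tail_erase_false_growFirstBlock (v : List Bool) :
    (growFirstBlock v).tail.erase false = v := by
  have : false ∉ v.takeWhile id := fun h => by simpa using mem_takeWhile_imp h
  rw [growFirstBlock, tail_cons, erase_append_right _ this, erase_cons_head,
    takeWhile_append_dropWhile]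

theorem growFirstBlock_injective : Function.Injective growFirstBlock := fun v w h => by
  rw [← tail_erase_false_growFirstBlock v, h, tail_erase_false_growFirstBlock]

theorem RunConstrained.growFirstBlock_of_ne_nil {v : List Bool} (h : RunConstrained v)
    (hv : v ≠ []) : RunConstrained (growFirstBlock v) := by
  obtain ⟨i, u, hu, rfl⟩ := h.exists_eq_block_append hv
  rw [growFirstBlock_block_append]
  exact .block (i + 1) (by omega) hu

theorem RunConstrained.exists_eq_growFirstBlock {w : List Bool}
    (h : RunConstrained (true :: w)) :
    ∃ v, RunConstrained v ∧ true :: w = growFirstBlock v := by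
  obtain ⟨i, u, hu, hw⟩ := h.exists_eq_block_append (cons_ne_nil _ _)
  obtain ⟨i, rfl⟩ : ∃ j, i = j + 1 :=
    Nat.exists_eq_succ_of_ne_zero (by rintro rfl; simp at hw)
  exact ⟨_, .block_append i hu, by rw [hw, growFirstBlock_block_append]⟩

theorem length_growFirstBlock (v : List Bool) : (growFirstBlock v).length = v.length + 2 := by
  have h := congrArg length (takeWhile_append_dropWhile (p := id) (l := v))
  rw [length_append] at h
  simp only [growFirstBlock, length_cons, length_append]
  omega

theorem count_true_growFirstBlock (v : List Bool) :
    (growFirstBlock v).count true = v.count true + 1 := by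
  have h := congrArg (count true) (takeWhile_append_dropWhile (p := id) (l := v))
  rw [count_append] at h
  simp only [growFirstBlock, count_cons_self, count_append, count_cons_of_ne Bool.false_ne_true]
  omega

def rcWords (n k : ℕ) : Set (List Bool) :=
  {l | l.length = n ∧ RunConstrained l ∧ l.count true = k}

theorem rcWords_finite (n k : ℕ) : (rcWords n k).Finite :=
  (finite_length_eq Bool n).subset fun _ hl => hl.1

theorem rcWords_zero_right (n : ℕ) : rcWords n 0 = {replicate n false} := by
  ext l
  simp only [rcWords, Set.mem_ofPred_eq, Set.mem_singleton_iff, count_eq_zero]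
  constructor
  · rintro ⟨hl, -, h⟩
    exact eq_replicate_iff.2 ⟨hl, fun b hb => by cases b <;> simp_all⟩
  · rintro rfl
    exact ⟨length_replicate, .replicate_false n, by simp⟩

theorem rcWords_eq_empty {n k : ℕ} (hk : k ≠ 0) (hn : n ≤ 2 * k) : rcWords n k = ∅ := by
  refine Set.eq_empty_of_forall_notMem fun l ⟨hl, h, hc⟩ => ?_
  have := h.two_mul_count_true_lt_length (hc ▸ hk)
  omega

theorem rcWords_add_three_succ (n k : ℕ) :
    rcWords (n + 3) (k + 1) =
      cons false '' rcWords (n + 2) (k + 1) ∪ growFirstBlock '' rcWords (n + 1) k := by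
  ext l
  constructor
  · rintro ⟨hl, h, hc⟩
    obtain ⟨b, w, rfl⟩ := exists_cons_of_length_eq_add_one hl
    cases b
    · exact .inl ⟨w, ⟨by simpa using hl, h.of_false_cons, by simpa using hc⟩, rfl⟩
    · obtain ⟨v, hv, hw⟩ := h.exists_eq_growFirstBlock
      rw [hw, length_growFirstBlock] at hl
      rw [hw, count_true_growFirstBlock] at hc
      exact .inr ⟨v, ⟨by omega, hv, by omega⟩, hw.symm⟩
  · rintro (⟨w, ⟨hw, h, hc⟩, rfl⟩ | ⟨v, ⟨hv, h, hc⟩, rfl⟩)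
    · exact ⟨by simp [hw], .zero h, by simpa using hc⟩
    · exact ⟨by rw [length_growFirstBlock, hv],
        h.growFirstBlock_of_ne_nil (ne_nil_of_length_eq_add_one hv),
        by rw [count_true_growFirstBlock, hc]⟩

theorem ncard_rcWords_add_three_succ (n k : ℕ) :
    (rcWords (n + 3) (k + 1)).ncard =
      (rcWords (n + 2) (k + 1)).ncard + (rcWords (n + 1) k).ncard := by
  have disjoint : Disjoint (cons false '' rcWords (n + 2) (k + 1))
      (growFirstBlock '' rcWords (n + 1) k) := by
    rw [Set.disjoint_left]
    rintro _ ⟨w, -, rfl⟩ ⟨v, -, h⟩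
    simp [growFirstBlock] at h
  rw [rcWords_add_three_succ, Set.ncard_union_eq disjoint ((rcWords_finite _ _).image _)
    ((rcWords_finite _ _).image _), Set.ncard_image_of_injective _ cons_injective,
    Set.ncard_image_of_injective _ growFirstBlock_injective]

theorem ncard_rcWords (n k : ℕ) : (rcWords n k).ncard = (n - 1 - k).choose k := by
  induction n using Nat.strong_induction_on generalizing k with
  | _ n ih =>
    rcases k with _ | k
    · simp [rcWords_zero_right]
    by_cases hn : n ≤ 2 * (k + 1)
    · rw [rcWords_eq_empty k.succ_ne_zero hn, Set.ncard_empty, Nat.choose_eq_zero_of_lt (by omega)]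
    obtain ⟨m, rfl⟩ : ∃ m, n = m + 3 := ⟨n - 3, by omega⟩
    rw [ncard_rcWords_add_three_succ, ih _ (by omega), ih _ (by omega),
      show m + 3 - 1 - (k + 1) = m - k + 1 by omega, show m + 2 - 1 - (k + 1) = m - k by omega,
      show m + 1 - 1 - k = m - k by omega, Nat.choose_succ_succ', add_comm]

theorem card_subtype_ofFn_eq_ncard {α : Type*} (n : ℕ) (P : List α → Prop) :
    Nat.card {w : Fin n → α // P (ofFn w)} = {l : List α | l.length = n ∧ P l}.ncard := by
  have : {l : List α | l.length = n ∧ P l} = ofFn '' {w : Fin n → α | P (ofFn w)} := by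
    ext l
    constructor
    · rintro ⟨rfl, h⟩
      exact ⟨l.get, by rwa [Set.mem_ofPred_eq, ofFn_get], ofFn_get l⟩
    · rintro ⟨w, h, rfl⟩
      exact ⟨length_ofFn, h⟩
  rw [this, Set.ncard_image_of_injective _ ofFn_injective, ← Nat.card_coe_set_eq]
  rfl

theorem card_runConstrained_count_true (n k : ℕ) :
    Nat.card {w : Fin n → Bool // RunConstrained (ofFn w) ∧ (ofFn w).count true = k} =
      (n - 1 - k).choose k :=
  (card_subtype_ofFn_eq_ncard n _).trans (ncard_rcWords n k)

theorem RC.card_filter_count_true (n k : ℕ) :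
    #{w : RC n | (ofFn w.1).count true = k} = (n - 1 - k).choose k := by
  rw [← card_runConstrained_count_true, ← Fintype.card_subtype, ← Nat.card_eq_fintype_card]
  exact Nat.card_congr (Equiv.subtypeSubtypeEquivSubtypeInter
    (fun w : Fin n → Bool => RunConstrained (ofFn w)) (fun w => (ofFn w).count true = k))

theorem RC.count_true_le_half {n : ℕ} (w : RC n) : (ofFn w.1).count true ≤ n / 2 := by
  by_cases hw : (ofFn w.1).count true = 0
  · omega
  · have := w.2.two_mul_count_true_lt_length hw
    rw [length_ofFn] at this
    omega

open MvPolynomial in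
theorem aeval_Q (n : ℕ) :
    aeval (fun i : Fin 2 => if i = 0 then (Polynomial.X : Polynomial ℤ) else 1) (Q n) =
      ∑ w : RC n, Polynomial.X ^ (ofFn w.1).count true := by
  simp [Q]

open MvPolynomial in
theorem Q_at_q_eq_one_general (n : ℕ) :
    (MvPolynomial.aeval fun i : Fin 2 =>
        if i = 0 then (Polynomial.X : Polynomial ℤ) else 1) (Q n) =
      ∑ k ∈ Finset.range (n / 2 + 1),
        ((n - 1 - k).choose k : Polynomial ℤ) * Polynomial.X ^ k ∧
    ∀ k ≤ n / 2,
      Nat.card {w : Fin n → Bool //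
          RunConstrained (List.ofFn w) ∧ (List.ofFn w).count true = k} =
        (n - 1 - k).choose k := by
  refine ⟨?_, fun k _ => card_runConstrained_count_true n k⟩
  have hmaps : ∀ w : RC n, w ∈ univ → (ofFn w.1).count true ∈ Finset.range (n / 2 + 1) :=
    fun w _ => mem_range_succ_iff.2 w.count_true_le_half
  rw [aeval_Q, ← sum_fiberwise_of_maps_to' hmaps]
  simp_rw [sum_const, RC.card_filter_count_true, nsmul_eq_mul]

open MvPolynomial in
/-- Substituting `q = 1` into `Q_n(x,q)` yields `Σ_{k=0}^{⌊n/2⌋} C(n-1-k,k) xᵏ`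
for `n ≥ 2`; that is, the number of run-constrained binary strings of length
`n` with exactly `k` ones equals `C(n-1-k, k)`. -/
theorem Q_at_q_eq_one (n : ℕ) (hn : 2 ≤ n) :
    (MvPolynomial.aeval fun i : Fin 2 =>
        if i = 0 then (Polynomial.X : Polynomial ℤ) else 1) (Q n) =
      ∑ k ∈ Finset.range (n / 2 + 1),
        ((n - 1 - k).choose k : Polynomial ℤ) * Polynomial.X ^ k ∧
    ∀ k ≤ n / 2,
      Nat.card {w : Fin n → Bool //
          RunConstrained (List.ofFn w) ∧ (List.ofFn w).count true = k} =
        (n - 1 - k).choose k :=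
  Q_at_q_eq_one_general n
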